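/- Let R be a 1-dimensional Cohen-Macaulay local ring with finite integral closure, and let I be a regular ideal with Hom(I, I) = R. If I is reflexive (I = I**), then I is principal. -/

import Mathlib

set_option synthInstance.maxHeartbeats 400000

open IsLocalRing

/-- `Hom(I, I) = R`, expressed denominator-freely in the total ring of fractions:
whenever `(x/y)·I ⊆ I` for a regular denominator `y`, the fraction `x/y` lies in `R`. -/
def IsClosedIdeal (R : Type*) [CommRing R] (I : Ideal R) : Prop :=
  ∀ x : R, ∀ y ∈ nonZeroDivisors R, Ideal.span {x} * I ≤ Ideal.span {y} * I → x ∈ Ideal.span {y}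

/-!
Put `J = (a) : I`, so that `I·J ⊆ (a)` and `I = (a) : J`. If `a ∈ I·J`, then, `R` being local,
some product `i·j = a·u` has `u` a unit, and then `I = (i)`. Otherwise `I·J ⊆ a·𝔪`. Since `R` has
dimension one and a regular element `x ∈ 𝔪`, the maximal ideal is associated to `R/(x)`: there is
`z ∉ (x)` with `z·𝔪 ⊆ (x)`. Then `(z/x)·I·J ⊆ (a)`, so `(z/x)·I ⊆ (a) : J = I`, and closedness of
`I` forces `z ∈ (x)`, a contradiction.
-/

theorem IsLocalRing.eq_maximalIdeal_of_mem_nonZeroDivisors {R : Type*} [CommRing R] [IsLocalRing R]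
    (hdim : ringKrullDim R = 1) {p : Ideal R} [p.IsPrime] {x : R} (hx : x ∈ nonZeroDivisors R)
    (hxp : x ∈ p) : p = maximalIdeal R := by
  have : FiniteRingKrullDim R := by
    rw [finiteRingKrullDim_iff_ne_bot_and_top, hdim]; exact ⟨by decide, by decide⟩
  rw [← Ideal.height_eq_ringKrullDim_iff, hdim]
  refine le_antisymm (hdim ▸ Ideal.height_le_ringKrullDim_of_isPrime) ?_
  calc (1 : WithBot ℕ∞) ≤ (Ideal.span {x}).height := by
        exact_mod_cast Ideal.one_le_height_span_singleton_of_mem_nonZeroDivisors hx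
    _ ≤ p.height := by
        exact_mod_cast Ideal.height_mono ((Ideal.span_singleton_le_iff_mem _).mpr hxp)

theorem exists_notMem_forall_mul_mem_of_mem_associatedPrimes {R : Type*} [CommRing R]
    [IsNoetherianRing R] {I p : Ideal R} (hp : p ∈ associatedPrimes R (R ⧸ I)) :
    ∃ z ∉ I, ∀ r ∈ p, z * r ∈ I := by
  obtain ⟨hprime, z', rfl⟩ := isAssociatedPrime_iff.mp hp
  obtain ⟨z, rfl⟩ := Ideal.Quotient.mk_surjective z'
  refine ⟨z, fun hz => hprime.ne_top ?_, fun r hr => ?_⟩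
  · rw [Ideal.eq_top_iff_one, Submodule.mem_colon_singleton, Submodule.mem_bot, one_smul,
      Ideal.Quotient.eq_zero_iff_mem]
    exact hz
  · rw [Submodule.mem_colon_singleton, Submodule.mem_bot] at hr
    exact mul_comm r z ▸ Ideal.Quotient.eq_zero_iff_mem.mp hr

theorem IsLocalRing.maximalIdeal_mem_associatedPrimes_quotient_span_singleton {R : Type*}
    [CommRing R] [IsLocalRing R] [IsNoetherianRing R] (hdim : ringKrullDim R = 1) {x : R}
    (hxm : x ∈ maximalIdeal R) (hx : x ∈ nonZeroDivisors R) :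
    maximalIdeal R ∈ associatedPrimes R (R ⧸ Ideal.span {x}) := by
  have : Nontrivial (R ⧸ Ideal.span {x}) := Ideal.Quotient.nontrivial_iff.mpr <|
    ((Ideal.span_singleton_le_iff_mem _).mpr hxm).trans_lt
      (maximalIdeal.isMaximal R).ne_top.lt_top |>.ne
  obtain ⟨p, hp⟩ := associatedPrimes.nonempty R (R ⧸ Ideal.span {x})
  have := hp.isPrime
  have hxp : x ∈ p := hp.annihilator_le <| by
    rw [Submodule.annihilator_top, Ideal.annihilator_quotient]
    exact Ideal.mem_span_singleton_self x
  rwa [← eq_maximalIdeal_of_mem_nonZeroDivisors hdim hx hxp]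

section Colon

variable {R : Type*} [CommRing R] {I : Ideal R} {a : R}

theorem Ideal.exists_mul_eq_of_mem_colon_span_singleton {j y : R}
    (hj : j ∈ (Ideal.span {a}).colon I) (hy : y ∈ I) : ∃ c, j * y = a * c :=
  Ideal.mem_span_singleton.mp (Submodule.mem_colon.mp hj y hy)

theorem Ideal.eq_span_singleton_of_mul_eq_mul_isUnit (ha : a ∈ nonZeroDivisors R)
    {i j u : R} (hi : i ∈ I) (hj : j ∈ (Ideal.span {a}).colon I) (hu : IsUnit u)
    (hiju : i * j = a * u) : I = Ideal.span {i} := by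
  refine le_antisymm (fun y hy => ?_) ((Ideal.span_singleton_le_iff_mem _).mpr hi)
  obtain ⟨c, hc⟩ := exists_mul_eq_of_mem_colon_span_singleton hj hy
  have hyu : u * y = c * i := by
    refine (mul_cancel_right_mem_nonZeroDivisors ha).mp ?_
    linear_combination i * hc - y * hiju
  obtain ⟨v, hv⟩ := hu.exists_left_inv
  exact Ideal.mem_span_singleton'.mpr ⟨v * c, by linear_combination -v * hyu + y * hv⟩

theorem Ideal.isPrincipal_of_mem_mul_colon [IsLocalRing R] (ha : a ∈ nonZeroDivisors R)
    (haIJ : a ∈ I * (Ideal.span {a}).colon I) : I.IsPrincipal := by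
  by_contra hI
  have hle : I * (Ideal.span {a}).colon I ≤ Ideal.span {a} * maximalIdeal R := by
    refine Ideal.mul_le.mpr fun i hi j hj => ?_
    obtain ⟨u, hu⟩ := exists_mul_eq_of_mem_colon_span_singleton hj hi
    have hum : u ∈ maximalIdeal R := (mem_maximalIdeal u).mpr fun hunit =>
      hI ⟨i, eq_span_singleton_of_mul_eq_mul_isUnit ha hi hj hunit
        (by rw [mul_comm, hu])⟩
    exact Ideal.mem_span_singleton_mul.mpr ⟨u, hum, by rw [mul_comm i, hu]⟩
  obtain ⟨u, hum, hau⟩ := Ideal.mem_span_singleton_mul.mp (hle haIJ)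
  have hu1 : u = 1 := (mul_cancel_right_mem_nonZeroDivisors ha).mp (by linear_combination hau)
  exact (mem_maximalIdeal u).mp hum (hu1 ▸ isUnit_one)

theorem Ideal.span_mul_le_span_mul_of_forall_mul_mem {x z : R} (hx : x ∈ nonZeroDivisors R)
    (ha : a ∈ nonZeroDivisors R)
    (hrefl : (Ideal.span {a}).colon ((Ideal.span {a}).colon I) = I)
    (hz : ∀ t, a * t ∈ I * (Ideal.span {a}).colon I → z * t ∈ Ideal.span {x}) :
    Ideal.span {z} * I ≤ Ideal.span {x} * I := by
  refine Ideal.span_singleton_mul_le_iff.mpr fun i hi => ?_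
  have hzij : ∀ j ∈ (Ideal.span {a}).colon I, ∃ s, z * i * j = x * a * s := by
    intro j hj
    obtain ⟨t, ht⟩ := exists_mul_eq_of_mem_colon_span_singleton hj hi
    obtain ⟨s, hs⟩ := Ideal.mem_span_singleton.mp
      (hz t (ht ▸ mul_comm i j ▸ Ideal.mul_mem_mul hi hj))
    exact ⟨s, by linear_combination z * ht + a * hs⟩
  obtain ⟨s, hs⟩ := hzij a (Submodule.mem_colon.mpr fun y _ =>
    Ideal.mul_mem_right y _ (Ideal.mem_span_singleton_self a))
  have hzi : z * i = x * s := (mul_cancel_right_mem_nonZeroDivisors ha).mp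
    (by linear_combination hs)
  have hsI : s ∈ I := by
    rw [← hrefl]
    refine Submodule.mem_colon.mpr fun j hj => Ideal.mem_span_singleton.mpr ?_
    obtain ⟨r, hr⟩ := hzij j hj
    exact ⟨r, (mul_cancel_left_mem_nonZeroDivisors hx).mp
      (by rw [smul_eq_mul]; linear_combination hr - j * hzi)⟩
  exact hzi ▸ Ideal.mul_mem_mul (Ideal.mem_span_singleton_self x) hsI

end Colon

theorem principal_of_closed_reflexive_general
    (R : Type*) [CommRing R] [IsLocalRing R] [IsNoetherianRing R]
    (hdim : ringKrullDim R = 1)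
    (hCM : ∃ x ∈ maximalIdeal R, x ∈ nonZeroDivisors R)
    (I : Ideal R)
    (hClosed : IsClosedIdeal R I)
    (hrefl : ∃ a ∈ I, a ∈ nonZeroDivisors R ∧
      (Ideal.span {a}).colon ((Ideal.span {a}).colon I) = I) :
    I.IsPrincipal := by
  obtain ⟨a, -, ha, hbidual⟩ := hrefl
  by_cases haIJ : a ∈ I * (Ideal.span {a}).colon I
  · exact Ideal.isPrincipal_of_mem_mul_colon ha haIJ
  obtain ⟨x, hxm, hx⟩ := hCM
  obtain ⟨z, hzx, hzm⟩ := exists_notMem_forall_mul_mem_of_mem_associatedPrimes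
    (maximalIdeal_mem_associatedPrimes_quotient_span_singleton hdim hxm hx)
  have hzI : Ideal.span {z} * I ≤ Ideal.span {x} * I :=
    Ideal.span_mul_le_span_mul_of_forall_mul_mem hx ha hbidual fun t ht =>
      hzm t <| (mem_maximalIdeal t).mpr fun htu =>
        haIJ <| (Ideal.unit_mul_mem_iff_mem _ htu).mp (mul_comm a t ▸ ht)
  exact absurd (hClosed z x hx hzI) hzx

/-- let `R` be a one-dimensional Cohen-Macaulay local ring whose integral closure
(in its total ring of fractions) is a finite `R`-module, and let `I` be a regular ideal with
`Hom(I, I) = R`.  If `I` is reflexive, i.e. `I = I** = (a) : ((a) : I)` for a regular element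
`a ∈ I`, then `I` is principal. -/
theorem principal_of_closed_reflexive
    (R : Type*) [CommRing R] [IsLocalRing R] [IsNoetherianRing R]
    (hdim : ringKrullDim R = 1)
    (hCM : ∃ x ∈ maximalIdeal R, x ∈ nonZeroDivisors R)
    (hfin : Module.Finite R (integralClosure R (FractionRing R)))
    (I : Ideal R)
    (hClosed : IsClosedIdeal R I)
    (hrefl : ∃ a ∈ I, a ∈ nonZeroDivisors R ∧
      (Ideal.span {a}).colon ((Ideal.span {a}).colon I) = I) :
    I.IsPrincipal :=
  principal_of_closed_reflexive_general R hdim hCM I hClosed hrefl
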